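/- Let n ≥ 1, k > 0, c > 0, α ∈ (0,1), let h₁ ∈ ℝⁿ be nonzero with ĥ₁ := h₁/‖h₁‖, let H be a symmetric positive definite real n×n matrix, and set M := k(Iₙ − α ĥ₁ ĥ₁ᵀ). Then every complex eigenvalue of the matrix J_r := −M H − (c α/‖h₁‖²) h₁ h₁ᵀ is real and strictly negative. -/

import Mathlib

/-!
Since `P = ĥ₁ĥ₁ᵀ` is idempotent, `M = k(I − αP)` acts on the range of `P` as the scalar `k(1 − α)`,
so `J_r = −M Q` with `Q = H + (cα / (k(1 − α))) P`. Both `M` and `Q` are positive definite. For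
positive definite `A` and `B`, writing `A = S²` with `S = √A` gives
`charpoly (A B) = charpoly (S (S B)) = charpoly (S B S)`, and `S B S` is positive definite, so every
eigenvalue of `A B` is real and positive; hence every eigenvalue of `J_r` is real and negative.
-/

noncomputable section
open Matrix Polynomial

/-- `μ ∈ ℂ` is an eigenvalue of the real matrix `A`, i.e. a root of its
characteristic polynomial over `ℂ`. -/
def IsEig {m : Type} [Fintype m] [DecidableEq m] (A : Matrix m m ℝ) (μ : ℂ) : Prop :=
  ((A.charpoly).map (algebraMap ℝ ℂ)).IsRoot μ

section Projection

variable {ι R : Type*} [Fintype ι] [DecidableEq ι] [CommRing R] [PartialOrder R] [StarRing R]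
  [StarOrderedRing R] {v : ι → R}

theorem posSemidef_one_sub_vecMulVec (hv : star v ⬝ᵥ v = 1) :
    (1 - vecMulVec v (star v)).PosSemidef := by
  have hP : (vecMulVec v (star v))ᴴ = vecMulVec v (star v) := by
    rw [conjTranspose_vecMulVec, star_star]
  have hPP : vecMulVec v (star v) * vecMulVec v (star v) = vecMulVec v (star v) := by
    rw [vecMulVec_mul_vecMulVec, hv, one_smul]
  have : (1 - vecMulVec v (star v))ᴴ * (1 - vecMulVec v (star v)) = 1 - vecMulVec v (star v) := by
    rw [conjTranspose_sub, conjTranspose_one, hP, sub_mul, mul_sub, mul_sub, hPP]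
    simp only [one_mul, mul_one]; abel
  exact this ▸ posSemidef_conjTranspose_mul_self _

theorem posDef_smul_one_sub_smul_vecMulVec [IsStrictOrderedRing R] [NoZeroDivisors R]
    (hv : star v ⬝ᵥ v = 1) {k α : R} (hk : 0 < k) (hα₀ : 0 ≤ α) (hα₁ : α < 1) :
    (k • (1 - α • vecMulVec v (star v))).PosDef := by
  have h : 1 - α • vecMulVec v (star v) = (1 - α) • 1 + α • (1 - vecMulVec v (star v)) := by
    module
  rw [h]
  exact ((PosDef.one.smul (sub_pos.mpr hα₁)).add_posSemidef
    ((posSemidef_one_sub_vecMulVec hv).smul hα₀)).smul hk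

end Projection

section Eigenvalues

variable {ι : Type} [Fintype ι] [DecidableEq ι]

theorem isEig_iff_mem_spectrum {A : Matrix ι ι ℝ} {μ : ℂ} :
    IsEig A μ ↔ μ ∈ spectrum ℂ (A.map (algebraMap ℝ ℂ)) := by
  rw [mem_spectrum_iff_isRoot_charpoly, charpoly_map, IsEig]

theorem isEig_neg_iff {A : Matrix ι ι ℝ} {μ : ℂ} : IsEig (-A) μ ↔ IsEig A (-μ) := by
  rw [isEig_iff_mem_spectrum, isEig_iff_mem_spectrum, Matrix.map_neg _ (map_neg _),
    ← spectrum.neg_eq, Set.mem_neg]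

theorem Matrix.IsHermitian.exists_eigenvalues_eq_of_isEig {A : Matrix ι ι ℝ} (hA : A.IsHermitian)
    {μ : ℂ} (h : IsEig A μ) : ∃ i, μ = hA.eigenvalues i := by
  simpa [IsEig, hA.charpoly_eq, Polynomial.eval_prod, Finset.prod_eq_zero_iff, sub_eq_zero]
    using h

theorem Matrix.PosDef.pos_of_isEig {A : Matrix ι ι ℝ} (hA : A.PosDef) {μ : ℂ} (h : IsEig A μ) :
    μ.im = 0 ∧ 0 < μ.re := by
  obtain ⟨i, rfl⟩ := hA.isHermitian.exists_eigenvalues_eq_of_isEig h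
  simpa using hA.eigenvalues_pos i

open scoped MatrixOrder in
theorem Matrix.PosDef.exists_posDef_charpoly_mul_eq {A B : Matrix ι ι ℝ} (hA : A.PosDef)
    (hB : B.PosDef) : ∃ C : Matrix ι ι ℝ, C.PosDef ∧ (A * B).charpoly = C.charpoly := by
  have hA0 : 0 ≤ A := nonneg_iff_posSemidef.mpr hA.posSemidef
  set S := CFC.sqrt A
  have hS : Sᴴ = S := (nonneg_iff_posSemidef.mp (CFC.sqrt_nonneg A)).isHermitian
  have hSu : IsUnit S := (CFC.isUnit_sqrt_iff A).mpr hA.isUnit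
  refine ⟨star S * B * S, hSu.posDef_star_left_conjugate_iff.mpr hB, ?_⟩
  rw [← CFC.sqrt_mul_sqrt_self A, mul_assoc, charpoly_mul_comm, star_eq_conjTranspose, hS,
    mul_assoc]

theorem Matrix.PosDef.pos_of_isEig_mul {A B : Matrix ι ι ℝ} (hA : A.PosDef) (hB : B.PosDef)
    {μ : ℂ} (h : IsEig (A * B) μ) : μ.im = 0 ∧ 0 < μ.re := by
  obtain ⟨C, hC, hAB⟩ := hA.exists_posDef_charpoly_mul_eq hB
  exact hC.pos_of_isEig (by rwa [IsEig, ← hAB])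

end Eigenvalues

section Normalization

variable {ι : Type*} [Fintype ι]

theorem sqrt_dotProduct_self_mul_self (h : ι → ℝ) :
    Real.sqrt (h ⬝ᵥ h) * Real.sqrt (h ⬝ᵥ h) = h ⬝ᵥ h :=
  Real.mul_self_sqrt (by simpa using dotProduct_star_self_nonneg h)

theorem dotProduct_self_normalize {h : ι → ℝ} (hh : h ≠ 0) :
    ((Real.sqrt (h ⬝ᵥ h))⁻¹ • h) ⬝ᵥ ((Real.sqrt (h ⬝ᵥ h))⁻¹ • h) = 1 := by
  simp only [smul_dotProduct, dotProduct_smul, smul_eq_mul, ← mul_assoc, ← mul_inv,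
    sqrt_dotProduct_self_mul_self]
  exact inv_mul_cancel₀ (by simpa using hh)

theorem vecMulVec_normalize (h : ι → ℝ) :
    vecMulVec ((Real.sqrt (h ⬝ᵥ h))⁻¹ • h) ((Real.sqrt (h ⬝ᵥ h))⁻¹ • h) =
      (h ⬝ᵥ h)⁻¹ • vecMulVec h h := by
  simp only [smul_vecMulVec, vecMulVec_smul, smul_smul, ← mul_inv, sqrt_dotProduct_self_mul_self]

end Normalization

theorem neg_mul_sub_smul_eq_neg_mul_add_smul {ι K : Type*} [Fintype ι] [DecidableEq ι] [Field K]
    {P : Matrix ι ι K} (hP : P * P = P) (H : Matrix ι ι K) {k α : K} (hkα : k * (1 - α) ≠ 0)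
    (β : K) :
    -(k • (1 - α • P) * H) - β • P = -(k • (1 - α • P) * (H + (β / (k * (1 - α))) • P)) := by
  have hMP : k • (1 - α • P) * P = (k * (1 - α)) • P := by
    simp only [smul_mul, sub_mul, one_mul, hP]; module
  rw [Matrix.mul_add, Matrix.mul_smul, hMP, smul_smul, div_mul_cancel₀ _ hkα, neg_add']

theorem stmt17 (n : ℕ) (k c α : ℝ)
    (hk : 0 < k) (hc : 0 < c) (hα : α ∈ Set.Ioo (0 : ℝ) 1)
    (h₁ : Fin n → ℝ) (hh₁ : h₁ ≠ 0)
    (H : Matrix (Fin n) (Fin n) ℝ) (hH : H.PosDef) :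
    ∀ μ : ℂ,
      IsEig (-((k • ((1 : Matrix (Fin n) (Fin n) ℝ) -
            α • Matrix.vecMulVec ((Real.sqrt (h₁ ⬝ᵥ h₁))⁻¹ • h₁)
              ((Real.sqrt (h₁ ⬝ᵥ h₁))⁻¹ • h₁))) * H) -
          (c * α / (h₁ ⬝ᵥ h₁)) • Matrix.vecMulVec h₁ h₁) μ →
      μ.im = 0 ∧ μ.re < 0 := by
  intro μ hμ
  obtain ⟨hα₀, hα₁⟩ := hα
  set v := (Real.sqrt (h₁ ⬝ᵥ h₁))⁻¹ • h₁
  have hv : v ⬝ᵥ v = 1 := dotProduct_self_normalize hh₁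
  have hM : (k • (1 - α • vecMulVec v v)).PosDef := by
    simpa using posDef_smul_one_sub_smul_vecMulVec (by simpa using hv) hk hα₀.le hα₁
  have hQ : (H + (c * α / (k * (1 - α))) • vecMulVec v v).PosDef := by
    refine hH.add_posSemidef (PosSemidef.smul ?_ (by bound))
    simpa using posSemidef_vecMulVec_self_star v
  have hrank_one : (c * α / (h₁ ⬝ᵥ h₁)) • vecMulVec h₁ h₁ = (c * α) • vecMulVec v v := by
    rw [vecMulVec_normalize, smul_smul, div_eq_mul_inv]
  have hP : vecMulVec v v * vecMulVec v v = vecMulVec v v := by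
    rw [vecMulVec_mul_vecMulVec, hv, one_smul]
  rw [hrank_one, neg_mul_sub_smul_eq_neg_mul_add_smul hP H (mul_pos hk (sub_pos.mpr hα₁)).ne',
    isEig_neg_iff] at hμ
  obtain ⟨him, hre⟩ := hM.pos_of_isEig_mul hQ hμ
  exact ⟨by simpa using him, by simpa using hre⟩
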